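/- arXiv:2003.07776 — 4 statements merged into one kernel-verified Lean document; each statement's English description precedes it below -/
import Mathlib

section
/- Let Γ_k denote a Gamma-distributed random variable with shape k ∈ ℕ and rate 1. For all integers k ≥ 1 and all R > 0: (i) if k ≥ R then e^{−R} R^k/k! ≤ P(Γ_k ≤ R) ≤ e^{k−R}(R/k)^k ≤ 3√k · e^{−R} R^k/k!; (ii) if 1 ≤ k ≤ R then e^{−R} R^{k−1}/(k−1)! ≤ P(Γ_k > R) ≤ e^{k−R}(R/k)^k ≤ 3√k · e^{−R} R^k/k!. -/
open MeasureTheory Filter Set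

noncomputable section

/-- The distribution function of a Gamma random variable with shape `k ≥ 1` and rate `1`:
`P(Γ_k ≤ R) = (1/(k−1)!)∫_0^R x^{k−1} e^{−x} dx`. -/
def gammaCdf (k : ℕ) (R : ℝ) : ℝ :=
  (1 / (Nat.factorial (k - 1) : ℝ)) * ∫ x in Set.Ioc (0:ℝ) R, x ^ (k - 1) * Real.exp (-x)

/-! Differentiating `y ↦ e^{-y} ∑_{i<k} y^i/i!` gives `P(Γ_k > R) = e^{-R} ∑_{i<k} R^i/i!`,
i.e. `P(Γ_k ≤ R) = P(Poisson(R) ≥ k)`, so everything is about the head and the tail of the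
exponential series. The lower bounds keep one term of the relevant Poisson probability. The
upper bounds are Chernoff bounds: writing `R^i = (R/k)^i k^i`, on the relevant side of `k` the
factor `(R/k)^i` is at most `(R/k)^k`, and what remains sums to at most `e^k`. The last inequality
is Stirling's bound `k! ≤ e √k (k/e)^k`, from the monotonicity of the Stirling sequence. -/

open Real Finset Nat

lemma hasDerivAt_sum_range_pow_div_factorial (k : ℕ) (x : ℝ) :
    HasDerivAt (fun y : ℝ => ∑ i ∈ range (k + 1), y ^ i / i !)
      (∑ i ∈ range k, x ^ i / i !) x := by
  induction k with
  | zero => simpa using hasDerivAt_const x (1 : ℝ)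
  | succ k ih =>
    have hlast : HasDerivAt (fun y => y ^ (k + 1) / (k + 1)! : ℝ → ℝ) (x ^ k / k !) x := by
      refine ((hasDerivAt_pow (k + 1) x).div_const _).congr_deriv ?_
      rw [factorial_succ, add_tsub_cancel_right]
      push_cast
      field_simp
    simpa only [sum_range_succ _ (k + 1), sum_range_succ _ k] using ih.fun_add hlast

lemma one_sub_gammaCdf_eq {k : ℕ} (hk : 0 < k) {R : ℝ} (hR : 0 ≤ R) :
    1 - gammaCdf k R = exp (-R) * ∑ i ∈ range k, R ^ i / i ! := by
  obtain ⟨m, rfl⟩ : ∃ m, k = m + 1 := ⟨k - 1, by omega⟩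
  set F : ℝ → ℝ := fun y => -(exp (-y) * ∑ i ∈ range (m + 1), y ^ i / i !)
  have hF : ∀ y, HasDerivAt F (y ^ m * exp (-y) / m !) y := fun y => by
    refine ((hasDerivAt_neg' y).exp.mul
      (hasDerivAt_sum_range_pow_div_factorial m y)).neg.congr_deriv ?_
    rw [sum_range_succ]
    ring
  have hFTC : ∫ x in (0 : ℝ)..R, x ^ m * exp (-x) / m ! = F R - F 0 :=
    intervalIntegral.integral_eq_sub_of_hasDerivAt (fun y _ => hF y)
      (Continuous.intervalIntegrable (by fun_prop) _ _)
  have hcdf : gammaCdf (m + 1) R = ∫ x in (0 : ℝ)..R, x ^ m * exp (-x) / m ! := by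
    rw [gammaCdf, intervalIntegral.integral_of_le hR, integral_div, add_tsub_cancel_right,
      one_div_mul_eq_div]
  rw [hcdf, hFTC]
  simp [F, sum_range_succ']

lemma Real.hasSum_pow_div_factorial (x : ℝ) : HasSum (fun n => x ^ n / n !) (exp x) := by
  rw [exp_eq_exp_ℝ]
  exact NormedSpace.expSeries_div_hasSum_exp x

lemma pow_div_factorial_eq_div_pow_mul {t : ℝ} (ht : t ≠ 0) (R : ℝ) (n : ℕ) :
    R ^ n / n ! = (R / t) ^ n * (t ^ n / n !) := by
  rw [div_pow]; field_simp

lemma sum_range_pow_div_factorial_le {R t : ℝ} (ht : 0 < t) (htR : t ≤ R) (k : ℕ) :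
    ∑ i ∈ range k, R ^ i / i ! ≤ (R / t) ^ k * exp t := by
  have hx : 1 ≤ R / t := (one_le_div ht).2 htR
  calc ∑ i ∈ range k, R ^ i / i ! ≤ ∑ i ∈ range k, (R / t) ^ k * (t ^ i / i !) := by
        refine sum_le_sum fun i hi => ?_
        rw [pow_div_factorial_eq_div_pow_mul ht.ne' R i]
        gcongr
        exact (mem_range.1 hi).le
    _ ≤ (R / t) ^ k * exp t := by
        rw [← mul_sum]
        gcongr
        exact sum_le_exp_of_nonneg ht.le k

lemma exp_sub_sum_range_pow_div_factorial_le {R t : ℝ} (hR : 0 ≤ R) (ht : 0 < t) (hRt : R ≤ t)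
    (k : ℕ) : exp R - ∑ i ∈ range k, R ^ i / i ! ≤ (R / t) ^ k * exp t := by
  have hx₀ : 0 ≤ R / t := div_nonneg hR ht.le
  have hx₁ : R / t ≤ 1 := (div_le_one ht).2 hRt
  have htail := (hasSum_nat_add_iff' k).2 (hasSum_pow_div_factorial R)
  have htail' := ((hasSum_nat_add_iff' k).2 (hasSum_pow_div_factorial t)).mul_left ((R / t) ^ k)
  calc exp R - ∑ i ∈ range k, R ^ i / i !
        ≤ (R / t) ^ k * (exp t - ∑ i ∈ range k, t ^ i / i !) := by
        refine hasSum_le (fun n => ?_) htail htail'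
        rw [pow_div_factorial_eq_div_pow_mul ht.ne' R]
        exact mul_le_mul_of_nonneg_right (pow_le_pow_of_le_one hx₀ hx₁ (by omega))
          (by positivity)
    _ ≤ (R / t) ^ k * exp t := by
        gcongr
        exact sub_le_self _ (by positivity)

lemma factorial_mul_exp_one_div_pow_le {k : ℕ} (hk : 0 < k) :
    k ! * (exp 1 / k) ^ k ≤ exp 1 * √k := by
  have h := Stirling.stirlingSeq'_antitone (Nat.zero_le (k - 1))
  simp only [Function.comp, Nat.succ_eq_add_one, Nat.sub_add_cancel hk, zero_add,
    Stirling.stirlingSeq_one] at h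
  rw [Stirling.stirlingSeq] at h
  have hk' : (0 : ℝ) < k := by exact_mod_cast hk
  rw [div_le_div_iff₀ (by positivity) (by positivity), sqrt_mul zero_le_two, div_pow] at h
  rw [div_pow]
  field_simp at h ⊢
  exact h

lemma exp_sub_mul_div_pow_le_three_sqrt_mul {k : ℕ} (hk : 0 < k) {R : ℝ} (hR : 0 ≤ R) :
    exp (k - R) * (R / k) ^ k ≤ 3 * √k * (exp (-R) * R ^ k / k !) := by
  have hk' : (0 : ℝ) < k := by exact_mod_cast hk
  calc exp (k - R) * (R / k) ^ k
      = exp (-R) * R ^ k / k ! * (k ! * (exp 1 / k) ^ k) := by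
        rw [sub_eq_neg_add, exp_add, ← exp_one_pow, div_pow, div_pow]
        field_simp
    _ ≤ exp (-R) * R ^ k / k ! * (exp 1 * √k) :=
        mul_le_mul_of_nonneg_left (factorial_mul_exp_one_div_pow_le hk) (by positivity)
    _ ≤ exp (-R) * R ^ k / k ! * (3 * √k) := by
        gcongr
        exact exp_one_lt_d9.le.trans (by norm_num)
    _ = 3 * √k * (exp (-R) * R ^ k / k !) := mul_comm _ _

/-- Tail bounds for Gamma random variables with integer shape `k` and rate `1`:
(i) if `k ≥ R` then `e^{−R}R^k/k! ≤ P(Γ_k ≤ R) ≤ e^{k−R}(R/k)^k ≤ 3√k·e^{−R}R^k/k!`;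
(ii) if `1 ≤ k ≤ R` then `e^{−R}R^{k−1}/(k−1)! ≤ P(Γ_k > R) ≤ e^{k−R}(R/k)^k
    ≤ 3√k·e^{−R}R^k/k!`. -/
theorem gamma_tail_bounds (k : ℕ) (hk : 1 ≤ k) (R : ℝ) (hR : 0 < R) :
    ((R ≤ (k : ℝ)) →
      Real.exp (-R) * R ^ k / (Nat.factorial k : ℝ) ≤ gammaCdf k R ∧
      gammaCdf k R ≤ Real.exp ((k : ℝ) - R) * (R / k) ^ k ∧
      Real.exp ((k : ℝ) - R) * (R / k) ^ k
        ≤ 3 * Real.sqrt k * (Real.exp (-R) * R ^ k / (Nat.factorial k : ℝ))) ∧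
    (((k : ℝ) ≤ R) →
      Real.exp (-R) * R ^ (k - 1) / (Nat.factorial (k - 1) : ℝ) ≤ 1 - gammaCdf k R ∧
      1 - gammaCdf k R ≤ Real.exp ((k : ℝ) - R) * (R / k) ^ k ∧
      Real.exp ((k : ℝ) - R) * (R / k) ^ k
        ≤ 3 * Real.sqrt k * (Real.exp (-R) * R ^ k / (Nat.factorial k : ℝ))) := by
  have hk' : (0 : ℝ) < k := by exact_mod_cast hk
  have htail : 1 - gammaCdf k R = exp (-R) * ∑ i ∈ range k, R ^ i / i ! :=
    one_sub_gammaCdf_eq hk hR.le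
  have hcdf : gammaCdf k R = exp (-R) * (exp R - ∑ i ∈ range k, R ^ i / i !) := by
    rw [mul_sub, ← exp_add, neg_add_cancel, exp_zero, ← htail, sub_sub_cancel]
  have hchernoff : exp (k - R) * (R / k) ^ k = exp (-R) * ((R / k) ^ k * exp k) := by
    rw [sub_eq_neg_add, exp_add]
    ring
  have hstirling := exp_sub_mul_div_pow_le_three_sqrt_mul hk hR.le
  refine ⟨fun hRk => ⟨?_, ?_, hstirling⟩, fun hkR => ⟨?_, ?_, hstirling⟩⟩
  · rw [hcdf, mul_div_assoc]
    gcongr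
    rw [le_sub_iff_add_le', ← sum_range_succ]
    exact sum_le_exp_of_nonneg hR.le (k + 1)
  · rw [hcdf, hchernoff]
    gcongr
    exact exp_sub_sum_range_pow_div_factorial_le hR.le hk' hRk k
  · rw [htail, mul_div_assoc]
    gcongr
    exact single_le_sum (f := fun i => R ^ i / i !) (fun i _ => by positivity)
      (mem_range.2 (by omega))
  · rw [htail, hchernoff]
    gcongr
    exact sum_range_pow_div_factorial_le hk' hkR k

end
end

section
/- Under Assumption (LD), for a real shape parameter s > 0 let Γ_s denote a Gamma-distributed random variable with shape s and rate 1, i.e. P(Γ_s ≤ R) = (1/Γ(s))∫_0^R x^{s−1}e^{−x} dx. Then for every t ≥ 0: lim_{R→∞} −(1/v_R) · log P( Γ_{R + tΘ_R} ≤ R ) = J_γ(t). (This is the α = 0 instance of the paper's Lemma on the large-deviation tail of the radii; the three regimes of Assumption (LD) produce the three rate functions J_γ.) -/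
/-!
Write `P(Γ_s ≤ R) = γ(s, R) / Γ(s)` with the lower incomplete Gamma function `γ(s, R)`. For
`R ≤ s` the integrand of `γ(s, R)` is, up to a factor `e`, largest at `R`, and comparing the
integrand of `Γ(s)` with `s ^ (s - 1) e ^ (1 - s) e ^ (-x / s)` gives Stirling's formula up to
`O(log s)`. Hence, for `2 ≤ R ≤ s`, with Bennett's function `h(x) = (1 + x) log (1 + x) - x`,
`-log P(Γ_s ≤ R) = R h(s / R - 1) + O(log s + s / R)`. With `s = R + tΘ_R` the error is
`o(v_R)` in all three regimes, and `R h(tΘ_R / R) / v_R → J_γ(t)`: from `h(x) ~ x² / 2` at `0`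
in (i), from the continuity of `h` in (ii), and from `R h(tΘ / R) ≈ tΘ log (Θ / R)` together
with `log R / log Θ → 2 / γ` in (iii).
-/

open MeasureTheory Filter Set Topology

noncomputable section

/-- The distribution function of a Gamma random variable with real shape `s > 0` and rate `1`:
`P(Γ_s ≤ R) = (1/Γ(s))∫_0^R x^{s−1} e^{−x} dx`. -/
def gammaCdfReal (s R : ℝ) : ℝ :=
  (Real.Gamma s)⁻¹ * ∫ x in Set.Ioc (0:ℝ) R, x ^ (s - 1) * Real.exp (-x)

namespace GammaLargeDeviation

open Real

def lowerGamma (s R : ℝ) : ℝ := ∫ x in Ioc 0 R, x ^ (s - 1) * exp (-x)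

lemma gammaCdfReal_eq (s R : ℝ) : gammaCdfReal s R = (Gamma s)⁻¹ * lowerGamma s R := rfl

lemma integrableOn_rpow_mul_exp_neg_Ioc {s : ℝ} (hs : 0 < s) (R : ℝ) :
    IntegrableOn (fun x : ℝ => x ^ (s - 1) * exp (-x)) (Ioc 0 R) :=
  ((GammaIntegral_convergent hs).mono_set Ioc_subset_Ioi_self).congr_fun
    (fun _ _ => mul_comm _ _) measurableSet_Ioc

lemma lowerGamma_le_Gamma {s : ℝ} (hs : 0 < s) (R : ℝ) : lowerGamma s R ≤ Gamma s := by
  rw [lowerGamma, Gamma_eq_integral hs]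
  simp_rw [mul_comm (exp _)]
  refine setIntegral_mono_set ?_ ?_ Ioc_subset_Ioi_self.eventuallyLE
  · exact (GammaIntegral_convergent hs).congr_fun (fun _ _ => mul_comm _ _) measurableSet_Ioi
  · filter_upwards [self_mem_ae_restrict measurableSet_Ioi] with x hx
    exact mul_nonneg (rpow_nonneg (le_of_lt hx) _) (exp_nonneg _)

/-- Only the last unit interval `(R - 1, R]` is kept. -/
lemma rpow_mul_exp_neg_le_lowerGamma {s R : ℝ} (hs : 1 ≤ s) (hR : 1 ≤ R) :
    (R - 1) ^ (s - 1) * exp (-R) ≤ lowerGamma s R := by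
  have hint := integrableOn_rpow_mul_exp_neg_Ioc (by linarith : 0 < s) R
  have hsub : Ioc (R - 1) R ⊆ Ioc 0 R := Ioc_subset_Ioc_left (by linarith)
  have hvol : volume.real (Ioc (R - 1) R) = 1 := by simp [measureReal_def]
  calc (R - 1) ^ (s - 1) * exp (-R)
      = volume.real (Ioc (R - 1) R) • ((R - 1) ^ (s - 1) * exp (-R)) := by
        rw [hvol, one_smul]
    _ ≤ ∫ x in Ioc (R - 1) R, x ^ (s - 1) * exp (-x) := by
        refine setIntegral_ge_of_const_le measurableSet_Ioc (by simp) (fun x hx => ?_)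
          (hint.mono_set hsub)
        exact mul_le_mul (rpow_le_rpow (by linarith) hx.1.le (by linarith))
          (exp_le_exp.mpr (by linarith [hx.2])) (exp_nonneg _)
          (rpow_nonneg (by linarith [hx.1]) _)
    _ ≤ lowerGamma s R := by
        refine setIntegral_mono_set hint ?_ hsub.eventuallyLE
        filter_upwards [self_mem_ae_restrict measurableSet_Ioc] with x hx
        exact mul_nonneg (rpow_nonneg hx.1.le _) (exp_nonneg _)

lemma lowerGamma_pos {s R : ℝ} (hs : 1 ≤ s) (hR : 1 < R) : 0 < lowerGamma s R :=
  lt_of_lt_of_le (by have := sub_pos.mpr hR; positivity) (rpow_mul_exp_neg_le_lowerGamma hs hR.le)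

lemma rpow_mul_exp_neg_le_of_le {s R x : ℝ} (hs : 1 ≤ s) (hx : 0 < x) (hxR : x ≤ R)
    (hRs : R ≤ s) : x ^ (s - 1) * exp (-x) ≤ R ^ (s - 1) * exp (1 - R) := by
  have hR : 0 < R := hx.trans_le hxR
  rw [rpow_def_of_pos hx, rpow_def_of_pos hR, ← exp_add, ← exp_add, exp_le_exp]
  have hlog : log x - log R ≤ x / R - 1 := by
    rw [← log_div hx.ne' hR.ne']; exact log_le_sub_one_of_pos (by positivity)
  have h1 := mul_le_mul_of_nonneg_left hlog (by linarith : 0 ≤ s - 1)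
  have h2 : (s - 1) * (x / R - 1) ≤ (R - 1) * (x / R - 1) :=
    mul_le_mul_of_nonpos_right (by linarith) (by linarith [(div_le_one hR).mpr hxR])
  have h3 : (R - 1) * (x / R - 1) = x - R + 1 - x / R := by field_simp; ring
  linarith [div_nonneg hx.le hR.le]

lemma lowerGamma_le_rpow_mul_exp {s R : ℝ} (hs : 1 ≤ s) (hR : 0 < R) (hRs : R ≤ s) :
    lowerGamma s R ≤ R ^ s * exp (1 - R) := by
  have h := setIntegral_mono_on (integrableOn_rpow_mul_exp_neg_Ioc (by linarith) R)
    (integrableOn_const (C := R ^ (s - 1) * exp (1 - R)) (by simp)) measurableSet_Ioc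
    (fun x hx => rpow_mul_exp_neg_le_of_le hs hx.1 hx.2 hRs)
  rw [setIntegral_const, measureReal_def, volume_Ioc, sub_zero, ENNReal.toReal_ofReal hR.le,
    smul_eq_mul] at h
  calc lowerGamma s R ≤ R * (R ^ (s - 1) * exp (1 - R)) := h
    _ = R ^ s * exp (1 - R) := by rw [rpow_sub_one hR.ne']; field_simp

/-- Compare the integrand of `Γ(s)` with `s ^ (s - 1) * exp (1 - s) * exp (-x / s)`. -/
lemma Gamma_le_rpow_mul_exp {s : ℝ} (hs : 1 ≤ s) : Gamma s ≤ s ^ s * exp (1 - s) := by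
  have hs0 : 0 < s := by linarith
  have hpt : ∀ x ∈ Ioi (0 : ℝ), exp (-x) * x ^ (s - 1) ≤
      s ^ (s - 1) * exp (1 - s) * exp (-s⁻¹ * x) := by
    intro x hx
    rw [rpow_def_of_pos hx, rpow_def_of_pos hs0, ← exp_add, ← exp_add, ← exp_add, exp_le_exp]
    have hlog : log x - log s ≤ x / s - 1 := by
      rw [← log_div hx.ne' hs0.ne']; exact log_le_sub_one_of_pos (div_pos hx hs0)
    have key := mul_le_mul_of_nonneg_left hlog (by linarith : 0 ≤ s - 1)
    have hxs : (s - 1) * (x / s - 1) = x + (1 - s) - s⁻¹ * x := by field_simp; ring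
    linarith
  have h := setIntegral_mono_on (GammaIntegral_convergent hs0)
    ((exp_neg_integrableOn_Ioi 0 (inv_pos.mpr hs0)).const_mul (s ^ (s - 1) * exp (1 - s)))
    measurableSet_Ioi hpt
  rw [← Gamma_eq_integral hs0, integral_const_mul, integral_exp_mul_Ioi (by simpa using hs0),
    mul_zero, exp_zero, neg_div, div_neg, neg_neg, one_div, inv_inv] at h
  rw [show s ^ s = s ^ (s - 1) * s by rw [← rpow_add_one hs0.ne']; norm_num]
  linarith

lemma rpow_mul_exp_neg_le_Gamma {s : ℝ} (hs : 1 ≤ s) :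
    (s - 1) ^ (s - 1) * exp (-s) ≤ Gamma s :=
  (rpow_mul_exp_neg_le_lowerGamma hs hs).trans (lowerGamma_le_Gamma (by linarith) s)

lemma le_log_lowerGamma {s R : ℝ} (hs : 1 ≤ s) (hR : 1 < R) :
    (s - 1) * log (R - 1) - R ≤ log (lowerGamma s R) := by
  have hR1 : 0 < R - 1 := sub_pos.mpr hR
  have h := log_le_log (by positivity) (rpow_mul_exp_neg_le_lowerGamma hs hR.le)
  rwa [log_mul (by positivity) (exp_ne_zero _), log_rpow hR1, log_exp, ← sub_eq_add_neg] at h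

lemma log_lowerGamma_le {s R : ℝ} (hs : 1 ≤ s) (hR : 1 < R) (hRs : R ≤ s) :
    log (lowerGamma s R) ≤ s * log R + (1 - R) := by
  have hR0 : 0 < R := by linarith
  have h := log_le_log (lowerGamma_pos hs hR) (lowerGamma_le_rpow_mul_exp hs hR0 hRs)
  rwa [log_mul (by positivity) (exp_ne_zero _), log_rpow hR0, log_exp] at h

lemma le_log_Gamma {s : ℝ} (hs : 1 < s) : (s - 1) * log (s - 1) - s ≤ log (Gamma s) := by
  have hs1 : 0 < s - 1 := sub_pos.mpr hs
  have h := log_le_log (by positivity) (rpow_mul_exp_neg_le_Gamma hs.le)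
  rwa [log_mul (by positivity) (exp_ne_zero _), log_rpow hs1, log_exp, ← sub_eq_add_neg] at h

lemma log_Gamma_le {s : ℝ} (hs : 1 ≤ s) : log (Gamma s) ≤ s * log s + (1 - s) := by
  have hs0 : 0 < s := by linarith
  have h := log_le_log (Gamma_pos_of_pos hs0) (Gamma_le_rpow_mul_exp hs)
  rwa [log_mul (by positivity) (exp_ne_zero _), log_rpow hs0, log_exp] at h

lemma log_gammaCdfReal {s R : ℝ} (hs : 1 ≤ s) (hR : 1 < R) :
    log (gammaCdfReal s R) = log (lowerGamma s R) - log (Gamma s) := by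
  rw [gammaCdfReal_eq, log_mul (inv_ne_zero (Gamma_pos_of_pos (by linarith)).ne')
    (lowerGamma_pos hs hR).ne', log_inv, neg_add_eq_sub]

lemma log_sub_log_sub_one_le {a : ℝ} (ha : 1 < a) : log a - log (a - 1) ≤ (a - 1)⁻¹ := by
  have ha1 : 0 < a - 1 := by linarith
  rw [← log_div (by linarith) ha1.ne']
  calc log (a / (a - 1)) ≤ a / (a - 1) - 1 := log_le_sub_one_of_pos (by positivity)
    _ = (a - 1)⁻¹ := by field_simp; ring

/-- Bennett's function; `R * bennett (s / R - 1)` is the Cramér rate of the event `Γ_s ≤ R`. -/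
def bennett (x : ℝ) : ℝ := (1 + x) * log (1 + x) - x

lemma mul_bennett_sub_div {s R : ℝ} (hs : 0 < s) (hR : 0 < R) :
    R * bennett ((s - R) / R) = s * log s - s * log R - s + R := by
  have h : 1 + (s - R) / R = s / R := by field_simp; ring
  rw [bennett, h, log_div hs.ne' hR.ne']
  field_simp
  ring

lemma abs_neg_log_gammaCdfReal_sub_le {s R : ℝ} (hR : 2 ≤ R) (hRs : R ≤ s) :
    |-log (gammaCdfReal s R) - R * bennett ((s - R) / R)| ≤ log s + 2 * (s / R) + 2 := by
  have hR1 : 0 < R - 1 := by linarith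
  have hs1 : 0 < s - 1 := by linarith
  have hR_step : s * (log R - log (R - 1)) ≤ 2 * (s / R) :=
    calc s * (log R - log (R - 1)) ≤ s * (R - 1)⁻¹ :=
          mul_le_mul_of_nonneg_left (log_sub_log_sub_one_le (by linarith)) (by linarith)
      _ ≤ 2 * (s / R) := by
          rw [← div_eq_mul_inv, mul_div_assoc', div_le_div_iff₀ hR1 (by linarith)]
          nlinarith
  have hs_step : (s - 1) * (log s - log (s - 1)) ≤ 1 :=
    calc (s - 1) * (log s - log (s - 1)) ≤ (s - 1) * (s - 1)⁻¹ :=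
          mul_le_mul_of_nonneg_left (log_sub_log_sub_one_le (by linarith)) hs1.le
      _ = 1 := mul_inv_cancel₀ hs1.ne'
  have hs : 1 ≤ s := by linarith
  have hR' : 1 < R := by linarith
  have hI_ge := le_log_lowerGamma hs hR'
  have hI_le := log_lowerGamma_le hs hR' hRs
  have hΓ_ge := le_log_Gamma (by linarith : 1 < s)
  have hΓ_le := log_Gamma_le hs
  have hlogR := log_le_log hR1 (by linarith : R - 1 ≤ R)
  have hlogs := log_le_log (by linarith) hRs
  have hsR : 0 ≤ s / R := by positivity
  rw [mul_bennett_sub_div (by linarith) (by linarith), log_gammaCdfReal hs hR', abs_le]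
  constructor <;> linarith

lemma tendsto_neg_log_gammaCdfReal_div {s v : ℝ → ℝ} {L : ℝ}
    (hs : ∀ᶠ R in atTop, R ≤ s R) (hv : Tendsto v atTop atTop)
    (hlog : Tendsto (fun R => log (s R) / v R) atTop (𝓝 0))
    (hratio : Tendsto (fun R => s R / R / v R) atTop (𝓝 0))
    (hM : Tendsto (fun R => R * bennett ((s R - R) / R) / v R) atTop (𝓝 L)) :
    Tendsto (fun R => -log (gammaCdfReal (s R) R) / v R) atTop (𝓝 L) := by
  have herr : Tendsto (fun R => (log (s R) + 2 * (s R / R) + 2) / v R) atTop (𝓝 0) := by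
    have h := (hlog.add (hratio.const_mul 2)).add (hv.inv_tendsto_atTop.const_mul 2)
    simp only [mul_zero, add_zero] at h
    refine h.congr fun R => ?_
    simp only [Pi.inv_apply]
    ring
  have hdiff : Tendsto (fun R => -log (gammaCdfReal (s R) R) / v R -
      R * bennett ((s R - R) / R) / v R) atTop (𝓝 0) := by
    refine squeeze_zero_norm' ?_ herr
    filter_upwards [hs, hv.eventually_gt_atTop 0, eventually_ge_atTop 2] with R hRs hv0 hR
    rw [← sub_div, Real.norm_eq_abs, abs_div, abs_of_pos hv0]
    exact div_le_div_of_nonneg_right (abs_neg_log_gammaCdfReal_sub_le hR hRs) hv0.le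
  simpa using hM.add hdiff

lemma log_add_mul_le {R Θ t : ℝ} (hR : 1 ≤ R) (hΘ : 1 ≤ Θ) (ht : 0 ≤ t) :
    log (R + t * Θ) ≤ log (1 + t) + log R + log Θ := by
  rw [← log_mul (by positivity) (by positivity), ← log_mul (by positivity) (by positivity)]
  refine log_le_log (by positivity) ?_
  nlinarith [mul_nonneg (sub_nonneg.mpr hR) (mul_nonneg ht (by positivity : (0:ℝ) ≤ Θ)),
    mul_nonneg (sub_nonneg.mpr hΘ) (by positivity : (0:ℝ) ≤ R)]

lemma tendsto_neg_log_gammaCdfReal_add_mul_div {Θ v : ℝ → ℝ} {t L : ℝ} (ht : 0 ≤ t)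
    (hΘ : Tendsto Θ atTop atTop) (hv : Tendsto v atTop atTop)
    (hlogR : Tendsto (fun R => log R / v R) atTop (𝓝 0))
    (hlogΘ : Tendsto (fun R => log (Θ R) / v R) atTop (𝓝 0))
    (hΘR : Tendsto (fun R => Θ R / R / v R) atTop (𝓝 0))
    (hM : Tendsto (fun R => R * bennett (t * Θ R / R) / v R) atTop (𝓝 L)) :
    Tendsto (fun R => -log (gammaCdfReal (R + t * Θ R) R) / v R) atTop (𝓝 L) := by
  have hv0 := hv.eventually_gt_atTop 0
  refine tendsto_neg_log_gammaCdfReal_div ?_ hv ?_ ?_ (by simpa only [add_sub_cancel_left] using hM)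
  · filter_upwards [hΘ.eventually_ge_atTop 0] with R hΘ0
    exact le_add_of_nonneg_right (mul_nonneg ht hΘ0)
  · have hup := ((hv.inv_tendsto_atTop.const_mul (log (1 + t))).add hlogR).add hlogΘ
    rw [mul_zero, add_zero, add_zero] at hup
    refine squeeze_zero' ?_ ?_ hup
    · filter_upwards [hv0, eventually_ge_atTop 1, hΘ.eventually_ge_atTop 0] with R hv0 hR hΘ0
      exact div_nonneg (log_nonneg (le_add_of_le_of_nonneg hR (mul_nonneg ht hΘ0))) hv0.le
    · filter_upwards [hv0, eventually_ge_atTop 1, hΘ.eventually_ge_atTop 1] with R hv0 hR hΘ1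
      rw [Pi.inv_apply, ← div_eq_mul_inv, ← add_div, ← add_div]
      exact div_le_div_of_nonneg_right (log_add_mul_le hR hΘ1 ht) hv0.le
  · have h := hv.inv_tendsto_atTop.add (hΘR.const_mul t)
    simp only [mul_zero, add_zero] at h
    refine h.congr' ?_
    filter_upwards [eventually_gt_atTop 0] with R hR
    simp only [Pi.inv_apply]
    field_simp

lemma abs_bennett_sub_sq_div_two_le {u : ℝ} (hu : |u| ≤ 1 / 2) :
    |bennett u - u ^ 2 / 2| ≤ 4 * |u| ^ 3 := by
  have hlog : |log (1 + u) - u + u ^ 2 / 2| ≤ 2 * |u| ^ 3 := by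
    have h := abs_log_sub_add_sum_range_le (x := -u) (by rw [abs_neg]; linarith) 2
    norm_num [Finset.sum_range_succ] at h
    rw [show log (1 + u) - u + u ^ 2 / 2 = -u + u ^ 2 / 2 + log (1 + u) by ring]
    refine h.trans ?_
    rw [div_le_iff₀ (by linarith)]
    nlinarith [mul_le_mul_of_nonneg_left hu (pow_nonneg (abs_nonneg u) 3)]
  have hid : bennett u - u ^ 2 / 2 = (1 + u) * (log (1 + u) - u + u ^ 2 / 2) - u ^ 3 / 2 := by
    rw [bennett]; ring
  have h1u : |1 + u| ≤ 3 / 2 := by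
    calc |1 + u| ≤ |1| + |u| := abs_add_le _ _
      _ ≤ 3 / 2 := by rw [abs_one]; linarith
  rw [hid]
  calc |(1 + u) * (log (1 + u) - u + u ^ 2 / 2) - u ^ 3 / 2|
      ≤ |1 + u| * |log (1 + u) - u + u ^ 2 / 2| + |u| ^ 3 / 2 := by
        refine (abs_sub _ _).trans ?_
        rw [abs_mul, abs_div, abs_pow, abs_two]
    _ ≤ 3 / 2 * (2 * |u| ^ 3) + |u| ^ 3 / 2 := by gcongr
    _ ≤ 4 * |u| ^ 3 := by nlinarith [pow_nonneg (abs_nonneg u) 3]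

lemma tendsto_bennett_mul_div_sq (t : ℝ) :
    Tendsto (fun y => bennett (t * y) / y ^ 2) (𝓝[≠] 0) (𝓝 (t ^ 2 / 2)) := by
  rw [tendsto_iff_norm_sub_tendsto_zero]
  have hlin : Tendsto (fun y : ℝ => 4 * |t| ^ 3 * |y|) (𝓝[≠] 0) (𝓝 0) := by
    have h : Tendsto (fun y : ℝ => 4 * |t| ^ 3 * |y|) (𝓝 0) (𝓝 (4 * |t| ^ 3 * |0|)) :=
      (continuous_const.mul continuous_abs).tendsto 0
    rw [abs_zero, mul_zero] at h
    exact h.mono_left nhdsWithin_le_nhds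
  refine squeeze_zero' (Eventually.of_forall fun _ => norm_nonneg _) ?_ hlin
  have hsmall : ∀ᶠ y in 𝓝[≠] (0 : ℝ), |t * y| ≤ 1 / 2 := by
    have h : Tendsto (fun y : ℝ => |t * y|) (𝓝 0) (𝓝 0) := by
      simpa using ((continuous_const.mul continuous_id).abs.tendsto (0 : ℝ))
    exact (h.eventually (eventually_le_nhds (by norm_num))).filter_mono nhdsWithin_le_nhds
  filter_upwards [hsmall, self_mem_nhdsWithin] with y hy (hy0 : y ≠ 0)
  have hy2 : 0 < y ^ 2 := by positivity
  have hid : bennett (t * y) / y ^ 2 - t ^ 2 / 2 = (bennett (t * y) - (t * y) ^ 2 / 2) / y ^ 2 := by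
    field_simp
  rw [Real.norm_eq_abs, hid, abs_div, abs_of_pos hy2, div_le_iff₀ hy2]
  calc |bennett (t * y) - (t * y) ^ 2 / 2| ≤ 4 * |t * y| ^ 3 := abs_bennett_sub_sq_div_two_le hy
    _ = 4 * |t| ^ 3 * |y| * y ^ 2 := by rw [abs_mul, mul_pow, ← sq_abs y]; ring

lemma tendsto_mul_bennett_div_of_sublinear {Θ : ℝ → ℝ} (t : ℝ)
    (hΘ0 : ∀ᶠ R in atTop, Θ R ≠ 0) (hΘR : Tendsto (fun R => Θ R / R) atTop (𝓝 0)) :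
    Tendsto (fun R => R * bennett (t * Θ R / R) / (Θ R ^ 2 / R)) atTop (𝓝 (t ^ 2 / 2)) := by
  have hy : Tendsto (fun R => Θ R / R) atTop (𝓝[≠] 0) := by
    refine tendsto_nhdsWithin_iff.mpr ⟨hΘR, ?_⟩
    filter_upwards [hΘ0, eventually_ne_atTop 0] with R h0 hR
    exact div_ne_zero h0 hR
  refine ((tendsto_bennett_mul_div_sq t).comp hy).congr' ?_
  filter_upwards [hΘ0, eventually_ne_atTop 0] with R h0 hR
  simp only [Function.comp_apply, mul_div_assoc]
  field_simp

lemma tendsto_neg_log_gammaCdfReal_of_sublinear {Θ : ℝ → ℝ} {t : ℝ} (ht : 0 ≤ t)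
    (hLD : Tendsto (fun R => Θ R / sqrt (R * log R)) atTop atTop)
    (hΘR : Tendsto (fun R => Θ R / R) atTop (𝓝 0)) :
    Tendsto (fun R => -log (gammaCdfReal (R + t * Θ R) R) / (Θ R ^ 2 / R)) atTop
      (𝓝 (t ^ 2 / 2)) := by
  have hΘ0 : ∀ᶠ R in atTop, 0 < Θ R := by
    filter_upwards [hLD.eventually_gt_atTop 0] with R h
    exact ((div_pos_iff.mp h).resolve_right fun h' => (sqrt_nonneg _).not_gt h'.2).1
  have hΘle : ∀ᶠ R in atTop, Θ R ≤ R := by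
    filter_upwards [hΘR.eventually (eventually_le_nhds one_pos), eventually_gt_atTop 0]
      with R h hR
    rwa [div_le_one hR] at h
  -- `Θ² / R = w² log R` with `w = Θ / √(R log R) → ∞`
  have hw : Tendsto (fun R => (Θ R / sqrt (R * log R)) ^ 2) atTop atTop := by
    simpa only [sq] using hLD.atTop_mul_atTop₀ hLD
  have hv_eq : ∀ᶠ R in atTop, Θ R ^ 2 / R = (Θ R / sqrt (R * log R)) ^ 2 * log R := by
    filter_upwards [eventually_gt_atTop 1] with R hR
    have hlog := log_pos hR
    rw [div_pow, sq_sqrt (by positivity)]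
    field_simp
  have hv : Tendsto (fun R => Θ R ^ 2 / R) atTop atTop :=
    (hw.atTop_mul_atTop₀ tendsto_log_atTop).congr' (hv_eq.mono fun _ h => h.symm)
  have hlogR : Tendsto (fun R => log R / (Θ R ^ 2 / R)) atTop (𝓝 0) := by
    refine hw.inv_tendsto_atTop.congr' ?_
    filter_upwards [hv_eq, eventually_gt_atTop 1] with R h hR
    rw [Pi.inv_apply, h, div_mul_cancel_right₀ (log_pos hR).ne']
  have hΘ : Tendsto Θ atTop atTop := by
    refine tendsto_atTop_mono' atTop ?_ hv
    filter_upwards [hΘ0, hΘle] with R h0 hle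
    rw [div_le_iff₀ (h0.trans_le hle), sq]
    exact mul_le_mul_of_nonneg_left hle h0.le
  have hlogΘ : Tendsto (fun R => log (Θ R) / (Θ R ^ 2 / R)) atTop (𝓝 0) := by
    refine squeeze_zero' ?_ ?_ hlogR
    · filter_upwards [hΘ.eventually_ge_atTop 1, hv.eventually_gt_atTop 0] with R h1 hv0
      exact div_nonneg (log_nonneg h1) hv0.le
    · filter_upwards [hΘ0, hΘle, hv.eventually_gt_atTop 0] with R h0 hle hv0
      exact div_le_div_of_nonneg_right (log_le_log h0 hle) hv0.le
  refine tendsto_neg_log_gammaCdfReal_add_mul_div ht hΘ hv hlogR hlogΘ ?_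
    (tendsto_mul_bennett_div_of_sublinear t (hΘ0.mono fun _ h => h.ne') hΘR)
  simpa only [div_eq_mul_inv, zero_mul, Pi.inv_apply] using hΘR.mul hv.inv_tendsto_atTop

lemma continuous_bennett : Continuous bennett :=
  (continuous_mul_log.comp (continuous_const.add continuous_id)).sub continuous_id

lemma tendsto_neg_log_gammaCdfReal_of_linear {Θ : ℝ → ℝ} {t : ℝ} (ht : 0 ≤ t)
    (hΘR : Tendsto (fun R => Θ R / R) atTop (𝓝 1)) :
    Tendsto (fun R => -log (gammaCdfReal (R + t * Θ R) R) / Θ R) atTop (𝓝 (bennett t)) := by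
  have hΘ : Tendsto Θ atTop atTop := by
    refine (hΘR.pos_mul_atTop one_pos tendsto_id).congr' ?_
    filter_upwards [eventually_ne_atTop 0] with R hR
    exact div_mul_cancel₀ _ hR
  have hRΘ : Tendsto (fun R => R / Θ R) atTop (𝓝 1) := by
    simpa only [inv_div, inv_one] using hΘR.inv₀ one_ne_zero
  have hlog_div : Tendsto (fun x : ℝ => log x / x) atTop (𝓝 0) := by
    simpa using isLittleO_log_id_atTop.tendsto_div_nhds_zero
  have hlogR : Tendsto (fun R => log R / Θ R) atTop (𝓝 0) := by
    have h := hlog_div.mul hRΘ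
    rw [zero_mul] at h
    refine h.congr' ?_
    filter_upwards [eventually_ne_atTop 0] with R hR
    field_simp
  have hM : Tendsto (fun R => R * bennett (t * Θ R / R) / Θ R) atTop (𝓝 (bennett t)) := by
    have h := hRΘ.mul ((continuous_bennett.tendsto t).comp (by simpa using hΘR.const_mul t))
    rw [one_mul] at h
    refine h.congr' ?_
    filter_upwards [hΘ.eventually_ne_atTop 0] with R hΘ0
    simp only [Function.comp_apply, mul_div_assoc]
    field_simp
  refine tendsto_neg_log_gammaCdfReal_add_mul_div ht hΘ hΘ hlogR (hlog_div.comp hΘ) ?_ hM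
  simpa only [div_eq_mul_inv, mul_zero, Pi.inv_apply] using hΘR.mul hΘ.inv_tendsto_atTop

lemma tendsto_atTop_of_div_self_tendsto_atTop {Θ : ℝ → ℝ}
    (hΘR : Tendsto (fun R => Θ R / R) atTop atTop) : Tendsto Θ atTop atTop := by
  refine (hΘR.atTop_mul_atTop₀ tendsto_id).congr' ?_
  filter_upwards [eventually_ne_atTop 0] with R hR
  exact div_mul_cancel₀ _ hR

/-- For `R ≪ Θ` the main term is `R * bennett (t * Θ / R) ≈ t * Θ * log (Θ / R)`. -/
lemma tendsto_mul_bennett_div_of_superlinear {Θ : ℝ → ℝ} {t c : ℝ} (ht : 0 ≤ t)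
    (hΘR : Tendsto (fun R => Θ R / R) atTop atTop)
    (hc : Tendsto (fun R => log R / log (Θ R)) atTop (𝓝 c)) :
    Tendsto (fun R => R * bennett (t * Θ R / R) / (Θ R * log (Θ R))) atTop
      (𝓝 (t * (1 - c))) := by
  rcases ht.eq_or_lt with rfl | ht
  · simp [bennett]
  have hΘ := tendsto_atTop_of_div_self_tendsto_atTop hΘR
  have hlogΘ : Tendsto (fun R => log (Θ R)) atTop atTop := tendsto_log_atTop.comp hΘ
  have hRΘ : Tendsto (fun R => R / Θ R + t) atTop (𝓝 t) := by
    simpa only [Pi.inv_apply, inv_div, zero_add] using hΘR.inv_tendsto_atTop.add_const t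
  have hlog_ratio : Tendsto (fun R => log (R / Θ R + t) / log (Θ R) + 1 - log R / log (Θ R))
      atTop (𝓝 (1 - c)) := by
    have h := ((((continuousAt_log ht.ne').tendsto.comp hRΘ).div_atTop hlogΘ).add_const 1).sub hc
    rwa [zero_add] at h
  have h := (hRΘ.mul hlog_ratio).sub ((tendsto_const_nhds (x := t)).div_atTop hlogΘ)
  rw [sub_zero] at h
  refine h.congr' ?_
  filter_upwards [hΘ.eventually_gt_atTop 0, hlogΘ.eventually_gt_atTop 0, eventually_gt_atTop 0]
    with R hΘ0 hlogΘ0 hR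
  have hsplit : 1 + t * Θ R / R = Θ R * (R / Θ R + t) / R := by field_simp
  have hlogΘ0' := hlogΘ0.ne'
  rw [bennett, hsplit, log_div (by positivity) hR.ne', log_mul hΘ0.ne' (by positivity)]
  field_simp
  ring

lemma tendsto_neg_log_gammaCdfReal_of_superlinear {Θ : ℝ → ℝ} {t c : ℝ} (ht : 0 ≤ t)
    (hΘR : Tendsto (fun R => Θ R / R) atTop atTop)
    (hc : Tendsto (fun R => log R / log (Θ R)) atTop (𝓝 c)) :
    Tendsto (fun R => -log (gammaCdfReal (R + t * Θ R) R) / (Θ R * log (Θ R))) atTop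
      (𝓝 (t * (1 - c))) := by
  have hΘ := tendsto_atTop_of_div_self_tendsto_atTop hΘR
  have hlogΘ : Tendsto (fun R => log (Θ R)) atTop atTop := tendsto_log_atTop.comp hΘ
  have hv : Tendsto (fun R => Θ R * log (Θ R)) atTop atTop := hΘ.atTop_mul_atTop₀ hlogΘ
  have hlogΘv : Tendsto (fun R => log (Θ R) / (Θ R * log (Θ R))) atTop (𝓝 0) := by
    refine hΘ.inv_tendsto_atTop.congr' ?_
    filter_upwards [hlogΘ.eventually_gt_atTop 0] with R h
    rw [Pi.inv_apply, div_mul_cancel_right₀ h.ne']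
  have hlogRv : Tendsto (fun R => log R / (Θ R * log (Θ R))) atTop (𝓝 0) := by
    refine squeeze_zero' ?_ ?_ hlogΘv
    · filter_upwards [eventually_ge_atTop 1, hv.eventually_gt_atTop 0] with R hR hv0
      exact div_nonneg (log_nonneg hR) hv0.le
    · filter_upwards [hΘR.eventually_ge_atTop 1, eventually_gt_atTop 0,
        hv.eventually_gt_atTop 0] with R h hR hv0
      rw [le_div_iff₀ hR, one_mul] at h
      exact div_le_div_of_nonneg_right (log_le_log hR h) hv0.le
  have hΘRv : Tendsto (fun R => Θ R / R / (Θ R * log (Θ R))) atTop (𝓝 0) := by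
    have h := tendsto_inv_atTop_zero.mul hlogΘ.inv_tendsto_atTop
    rw [mul_zero] at h
    refine h.congr' ?_
    filter_upwards [hΘ.eventually_gt_atTop 0] with R hΘ0
    simp only [Pi.inv_apply]
    field_simp
  exact tendsto_neg_log_gammaCdfReal_add_mul_div ht hΘ hv hlogRv hlogΘv hΘRv
    (tendsto_mul_bennett_div_of_superlinear ht hΘR hc)

lemma log_div_log_eq_two_div (a b : ℝ) : log a / log b = 2 / (2 * log b / log a) := by
  rw [div_div_eq_mul_div, mul_div_mul_left _ _ two_ne_zero]

end GammaLargeDeviation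

open GammaLargeDeviation in
theorem gamma_large_deviation_tail_general
    (Θ : ℝ → ℝ)
    (hLD : Tendsto (fun R => Θ R / Real.sqrt (R * Real.log R)) atTop atTop)
    (v J : ℝ → ℝ)
    (hreg :
      (Tendsto (fun R => Θ R / R) atTop (𝓝 0) ∧
        (∃ γ : ℝ, Tendsto (fun R => 2 * Real.log (Θ R) / Real.log R) atTop (𝓝 γ)) ∧
        v = (fun R => (Θ R) ^ 2 / R) ∧ J = fun t => t ^ 2 / 2) ∨
      (Tendsto (fun R => Θ R / R) atTop (𝓝 1) ∧
        v = Θ ∧ J = fun t => (1 + t) * Real.log (1 + t) - t) ∨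
      (Tendsto (fun R => Θ R / R) atTop atTop ∧
        v = (fun R => Θ R * Real.log (Θ R)) ∧
        ((∃ γ : ℝ, 0 < γ ∧
            Tendsto (fun R => 2 * Real.log (Θ R) / Real.log R) atTop (𝓝 γ) ∧
            J = fun t => t * (1 - 2 / γ)) ∨
          (Tendsto (fun R => 2 * Real.log (Θ R) / Real.log R) atTop atTop ∧
            J = fun t => t)))) :
    ∀ t : ℝ, 0 ≤ t →
      Tendsto (fun R => -(Real.log (gammaCdfReal (R + t * Θ R) R)) / v R)
        atTop (𝓝 (J t)) := by
  intro t ht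
  rcases hreg with ⟨hΘR, -, rfl, rfl⟩ | ⟨hΘR, rfl, rfl⟩ |
    ⟨hΘR, rfl, ⟨γ, hγ, hlog, rfl⟩ | ⟨hlog, rfl⟩⟩
  · exact tendsto_neg_log_gammaCdfReal_of_sublinear ht hLD hΘR
  · exact tendsto_neg_log_gammaCdfReal_of_linear ht hΘR
  · exact tendsto_neg_log_gammaCdfReal_of_superlinear ht hΘR
      ((tendsto_const_nhds.div hlog hγ.ne').congr fun R => (log_div_log_eq_two_div _ _).symm)
  · simpa using tendsto_neg_log_gammaCdfReal_of_superlinear ht hΘR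
      ((tendsto_const_nhds.div_atTop hlog).congr fun R => (log_div_log_eq_two_div _ _).symm)

/-- Large-deviation tail of the Gamma radii under Assumption (LD): in each of the three
regimes (Θ_R/R → 0, → 1, → ∞) with the corresponding normalization `v` and rate function `J`,
`lim_{R→∞} −(1/v_R) log P(Γ_{R+tΘ_R} ≤ R) = J_γ(t)` for every `t ≥ 0`. -/
theorem gamma_large_deviation_tail
    (Θ : ℝ → ℝ) (hΘpos : ∀ R > (0:ℝ), 0 < Θ R)
    (hLD : Tendsto (fun R => Θ R / Real.sqrt (R * Real.log R)) atTop atTop)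
    (v J : ℝ → ℝ)
    (hreg :
      (Tendsto (fun R => Θ R / R) atTop (𝓝 0) ∧
        (∃ γ : ℝ, Tendsto (fun R => 2 * Real.log (Θ R) / Real.log R) atTop (𝓝 γ)) ∧
        v = (fun R => (Θ R) ^ 2 / R) ∧ J = fun t => t ^ 2 / 2) ∨
      (Tendsto (fun R => Θ R / R) atTop (𝓝 1) ∧
        v = Θ ∧ J = fun t => (1 + t) * Real.log (1 + t) - t) ∨
      (Tendsto (fun R => Θ R / R) atTop atTop ∧
        v = (fun R => Θ R * Real.log (Θ R)) ∧
        ((∃ γ : ℝ, 0 < γ ∧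
            Tendsto (fun R => 2 * Real.log (Θ R) / Real.log R) atTop (𝓝 γ) ∧
            J = fun t => t * (1 - 2 / γ)) ∨
          (Tendsto (fun R => 2 * Real.log (Θ R) / Real.log R) atTop atTop ∧
            J = fun t => t)))) :
    ∀ t : ℝ, 0 ≤ t →
      Tendsto (fun R => -(Real.log (gammaCdfReal (R + t * Θ R) R)) / v R)
        atTop (𝓝 (J t)) :=
  gamma_large_deviation_tail_general Θ hLD v J hreg
end
end

section
/- Fix β > 0 and, under Assumption (LD), define p_R(u) = max{u, R}^β · e^{u−R} (R/u)^u for u, R > 0. Then for every C > 0: sup_{x ∈ [0,C]} | (1/v_R) log p_R(R + xΘ_R) + J_γ(x) | → 0 as R → ∞, i.e. −(1/v_R) log p_R(R + xΘ_R) → J_γ(x) uniformly for x ∈ [0,C]. -/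
/-!
Writing `u = R (1 + y)`, one has `-log p_R(u) = R h(y) - β log u` with
`h(y) = (1 + y) log (1 + y) - y`, the Cramér rate function of the Poisson law.
The term `β log u / v_R` is `O((log R + Θ_R / R) / v_R)`, which vanishes in every regime
(for `Θ_R ≪ R` precisely because `Θ_R ≫ √(R log R)`). In the main term `R h(x Θ_R / R) / v_R`
put `s = Θ_R / R`. When `s → 0` it is `h(x s) / s²`, which tends to `x² / 2` by the Taylor bound
`|h(y) - y² / 2| ≤ 4 y³`; when `s → 1` it is `h(x s) / s`, which tends to `h(x)` uniformly by
uniform continuity on a compact set; when `s → ∞` it is `h(x s) / (s log Θ_R)` with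
`h(x s) / s = x log s + O(1)`, and `log s / log Θ_R = 1 - log R / log Θ_R → 1 - 2 / γ`.
-/

open MeasureTheory Filter Set Topology

noncomputable section

/-- `p_R(u) = max{u,R}^β · e^{u−R} (R/u)^u`. -/
def pFun (β R u : ℝ) : ℝ :=
  (max u R) ^ β * Real.exp (u - R) * (R / u) ^ u

lemma tendstoUniformlyOn_of_abs_sub_le {ι α : Type*} {p : Filter ι} {s : Set α}
    {F : ι → α → ℝ} {f : α → ℝ} {e : ι → ℝ} (he : Tendsto e p (𝓝 0))
    (hF : ∀ᶠ i in p, ∀ x ∈ s, |F i x - f x| ≤ e i) : TendstoUniformlyOn F f p s := by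
  rw [Metric.tendstoUniformlyOn_iff]
  intro ε hε
  filter_upwards [hF, he.eventually_lt_const hε] with i hi hei x hx
  rw [dist_comm, Real.dist_eq]
  exact (hi x hx).trans_lt hei

theorem TendstoUniformlyOn.comp_tendsto {ι γ α β : Type*} [UniformSpace β] {F : ι → α → β}
    {f : α → β} {p : Filter ι} {s : Set α} {g : γ → ι} {q : Filter γ}
    (h : TendstoUniformlyOn F f p s) (hg : Tendsto g q p) :
    TendstoUniformlyOn (fun i => F (g i)) f q s :=
  fun u hu => hg.eventually (h u hu)

def poissonRate (y : ℝ) : ℝ := (1 + y) * Real.log (1 + y) - y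

lemma continuous_poissonRate : Continuous poissonRate :=
  (Real.continuous_mul_log.comp (continuous_const.add continuous_id)).sub continuous_id

lemma abs_log_one_add_sub_le {y : ℝ} (h0 : 0 ≤ y) (h1 : y ≤ 1 / 2) :
    |Real.log (1 + y) - (y - y ^ 2 / 2)| ≤ 2 * y ^ 3 := by
  have h := Real.abs_log_sub_add_sum_range_le (x := -y)
    (by rw [abs_neg, abs_of_nonneg h0]; linarith) 2
  simp only [Finset.sum_range_succ, Finset.sum_range_zero, abs_neg, abs_of_nonneg h0,
    sub_neg_eq_add] at h
  calc |Real.log (1 + y) - (y - y ^ 2 / 2)| = |-y + y ^ 2 / 2 + Real.log (1 + y)| := by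
        ring_nf
    _ ≤ y ^ 3 / (1 - y) := by convert h using 3; norm_num
    _ ≤ 2 * y ^ 3 := by
      rw [div_le_iff₀ (by linarith)]
      nlinarith [mul_nonneg (pow_nonneg h0 3) (show (0:ℝ) ≤ 1 - 2 * y by linarith)]

lemma abs_poissonRate_sub_sq_le {y : ℝ} (h0 : 0 ≤ y) (h1 : y ≤ 1 / 2) :
    |poissonRate y - y ^ 2 / 2| ≤ 4 * y ^ 3 := by
  have h := abs_log_one_add_sub_le h0 h1
  calc |poissonRate y - y ^ 2 / 2|
      = |(1 + y) * (Real.log (1 + y) - (y - y ^ 2 / 2)) - y ^ 3 / 2| := by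
        rw [poissonRate]; ring_nf
    _ ≤ (1 + y) * (2 * y ^ 3) + y ^ 3 / 2 := by
        refine (abs_sub _ _).trans (add_le_add ?_ (abs_of_nonneg (by positivity)).le)
        rw [abs_mul, abs_of_nonneg (by linarith)]
        exact mul_le_mul_of_nonneg_left h (by linarith)
    _ ≤ 4 * y ^ 3 := by nlinarith [pow_nonneg h0 3]

lemma abs_poissonRate_div_sub_mul_log_le {w x C : ℝ} (hw : 1 ≤ w) (hx0 : 0 ≤ x) (hxC : x ≤ C) :
    |poissonRate (x * w) / w - x * Real.log w| ≤ 2 + C + (1 + C) * Real.log (1 + C) := by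
  set a := w⁻¹ + x
  have hw0 : 0 < w := by linarith
  have ha0 : 0 < a := by positivity
  have haC : a ≤ 1 + C := by linarith [inv_le_one_of_one_le₀ hw]
  have hlogC : 0 ≤ Real.log (1 + C) := Real.log_nonneg (by linarith)
  have hexpand : poissonRate (x * w) / w - x * Real.log w
      = Real.log w / w + a * Real.log a - x := by
    have : 1 + x * w = w * a := by simp only [a]; field_simp
    rw [poissonRate, this, Real.log_mul hw0.ne' ha0.ne']
    simp only [a]
    field_simp
    ring
  have hlogw : |Real.log w / w| ≤ 1 := by
    rw [abs_of_nonneg (div_nonneg (Real.log_nonneg hw) hw0.le), div_le_one hw0]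
    linarith [Real.log_le_sub_one_of_pos hw0]
  have hlow : -1 ≤ a * Real.log a := by
    have := Real.one_sub_inv_le_log_of_pos ha0
    have : a * (1 - a⁻¹) = a - 1 := by field_simp
    nlinarith
  have hupp : a * Real.log a ≤ (1 + C) * Real.log (1 + C) :=
    calc a * Real.log a ≤ a * Real.log (1 + C) :=
          mul_le_mul_of_nonneg_left (Real.log_le_log ha0 haC) ha0.le
      _ ≤ (1 + C) * Real.log (1 + C) := mul_le_mul_of_nonneg_right haC hlogC
  rw [hexpand, abs_le]
  constructor <;> nlinarith [abs_le.1 hlogw]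

section ScaleFamilies

variable {ι : Type*} {l : Filter ι}

lemma tendstoUniformlyOn_poissonRate_div_sq {s : ι → ℝ} (hs : Tendsto s l (𝓝[>] 0)) (C : ℝ) :
    TendstoUniformlyOn (fun i x => poissonRate (x * s i) / s i ^ 2) (fun x => x ^ 2 / 2) l
      (Icc 0 C) := by
  have hs0 : Tendsto s l (𝓝 0) := tendsto_nhdsWithin_iff.1 hs |>.1
  refine tendstoUniformlyOn_of_abs_sub_le (by simpa using hs0.const_mul (4 * C ^ 3)) ?_
  filter_upwards [tendsto_nhdsWithin_iff.1 hs |>.2,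
    (by simpa using hs0.const_mul C : Tendsto (fun i => C * s i) l (𝓝 0)).eventually_le_const
      (by norm_num : (0:ℝ) < 1 / 2)] with i hpos hsmall x ⟨hx0, hxC⟩
  replace hpos : 0 < s i := hpos
  have hy : x * s i ≤ 1 / 2 := (mul_le_mul_of_nonneg_right hxC (le_of_lt hpos)).trans hsmall
  have hsq : x ^ 2 / 2 = (x * s i) ^ 2 / 2 / s i ^ 2 := by field_simp
  rw [hsq, ← sub_div, abs_div, abs_of_pos (pow_pos hpos 2), div_le_iff₀ (pow_pos hpos 2)]
  calc |poissonRate (x * s i) - (x * s i) ^ 2 / 2| ≤ 4 * (x * s i) ^ 3 :=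
        abs_poissonRate_sub_sq_le (mul_nonneg hx0 (le_of_lt hpos)) hy
    _ ≤ 4 * C ^ 3 * s i * s i ^ 2 := by
        have := pow_le_pow_left₀ hx0 hxC 3
        have : 0 < s i ^ 3 := pow_pos hpos 3
        nlinarith

lemma tendstoUniformlyOn_poissonRate_div {t : ι → ℝ} (ht : Tendsto t l (𝓝 1)) (C : ℝ) :
    TendstoUniformlyOn (fun i x => poissonRate (x * t i) / t i) poissonRate l (Icc 0 C) := by
  set F : ℝ → ℝ → ℝ := fun τ x => poissonRate (x * τ) / τ
  have hcont : ContinuousOn ↿F (Icc (1 / 2) 2 ×ˢ Icc 0 C) := by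
    refine ((continuous_poissonRate.comp (continuous_snd.mul continuous_fst)).continuousOn).div
      continuous_fst.continuousOn fun q hq => ?_
    linarith [hq.1.1]
  have hF := (isCompact_Icc.prod isCompact_Icc).uniformContinuousOn_of_continuous hcont
    |>.tendstoUniformlyOn (x := 1) ⟨by norm_num, by norm_num⟩
  rw [nhdsWithin_eq_nhds.2 (Icc_mem_nhds (by norm_num) (by norm_num))] at hF
  simpa [F] using hF.comp_tendsto ht

lemma tendstoUniformlyOn_poissonRate_div_mul {w L : ι → ℝ} {a : ℝ} (hw : ∀ᶠ i in l, 1 ≤ w i)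
    (hL : Tendsto L l atTop) (ha : Tendsto (fun i => Real.log (w i) / L i) l (𝓝 a)) (C : ℝ) :
    TendstoUniformlyOn (fun i x => poissonRate (x * w i) / (w i * L i)) (fun x => x * a) l
      (Icc 0 C) := by
  set K := 2 + C + (1 + C) * Real.log (1 + C)
  have he : Tendsto (fun i => K / L i + C * |Real.log (w i) / L i - a|) l (𝓝 0) := by
    have h1 := (tendsto_const_nhds (x := K)).div_atTop hL
    have h2 := ((ha.sub_const a).abs).const_mul C
    simpa using h1.add h2
  refine tendstoUniformlyOn_of_abs_sub_le he ?_
  filter_upwards [hw, hL.eventually_gt_atTop 0] with i hwi hLi x ⟨hx0, hxC⟩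
  have hsplit : poissonRate (x * w i) / (w i * L i) - x * a
      = (poissonRate (x * w i) / w i - x * Real.log (w i)) / L i
        + x * (Real.log (w i) / L i - a) := by
    field_simp
    ring
  rw [hsplit]
  refine (abs_add_le _ _).trans (add_le_add ?_ ?_)
  · rw [abs_div, abs_of_pos hLi]
    exact div_le_div_of_nonneg_right (abs_poissonRate_div_sub_mul_log_le hwi hx0 hxC) hLi.le
  · rw [abs_mul, abs_of_nonneg hx0]
    exact mul_le_mul_of_nonneg_right hxC (abs_nonneg _)

end ScaleFamilies

lemma neg_log_pFun_mul_one_add (β : ℝ) {R y : ℝ} (hR : 0 < R) (hy : 0 ≤ y) :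
    -Real.log (pFun β R (R * (1 + y))) = R * poissonRate y - β * Real.log (R * (1 + y)) := by
  have h1y : 0 < 1 + y := by linarith
  have hmax : max (R * (1 + y)) R = R * (1 + y) := max_eq_left (by nlinarith)
  have hdiv : R / (R * (1 + y)) = (1 + y)⁻¹ := by field_simp
  rw [pFun, hmax, hdiv, Real.log_mul (by positivity) (by positivity),
    Real.log_mul (by positivity) (by positivity), Real.log_rpow (by positivity), Real.log_exp,
    Real.log_rpow (by positivity), Real.log_inv, poissonRate]
  ring

lemma tendstoUniformlyOn_mul_log_div_zero (β : ℝ) {Θ v : ℝ → ℝ} {C : ℝ}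
    (hΘ : ∀ᶠ R in atTop, 0 ≤ Θ R) (hv : ∀ᶠ R in atTop, 0 < v R)
    (hlog : Tendsto (fun R => Real.log R / v R) atTop (𝓝 0))
    (hscale : Tendsto (fun R => Θ R / (R * v R)) atTop (𝓝 0)) :
    TendstoUniformlyOn (fun R x => β * Real.log (R * (1 + x * (Θ R / R))) / v R) 0 atTop
      (Icc 0 C) := by
  refine tendstoUniformlyOn_of_abs_sub_le
    (e := fun R => |β| * (Real.log R / v R + C * (Θ R / (R * v R))))
    (by simpa using (hlog.add (hscale.const_mul C)).const_mul |β|) ?_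
  filter_upwards [eventually_ge_atTop 1, hΘ, hv] with R hR hΘR hvR x ⟨hx0, hxC⟩
  have hy : 0 ≤ x * (Θ R / R) := by positivity
  have hlog_le : Real.log (R * (1 + x * (Θ R / R))) ≤ Real.log R + C * (Θ R / R) := by
    rw [Real.log_mul (by positivity) (by positivity)]
    have := Real.log_le_sub_one_of_pos (show 0 < 1 + x * (Θ R / R) by positivity)
    nlinarith [mul_le_mul_of_nonneg_right hxC (show 0 ≤ Θ R / R by positivity)]
  have hlog_nonneg : 0 ≤ Real.log (R * (1 + x * (Θ R / R))) := Real.log_nonneg (by nlinarith)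
  simp only [Pi.zero_apply, sub_zero, abs_div, abs_mul, abs_of_pos hvR,
    abs_of_nonneg hlog_nonneg]
  rw [mul_div_assoc]
  refine mul_le_mul_of_nonneg_left ?_ (abs_nonneg β)
  calc Real.log (R * (1 + x * (Θ R / R))) / v R ≤ (Real.log R + C * (Θ R / R)) / v R :=
        div_le_div_of_nonneg_right hlog_le hvR.le
    _ = Real.log R / v R + C * (Θ R / (R * v R)) := by field_simp

lemma tendstoUniformlyOn_neg_log_pFun_div (β : ℝ) {Θ v J : ℝ → ℝ} {C : ℝ}
    (hΘ : ∀ᶠ R in atTop, 0 ≤ Θ R) (hv : ∀ᶠ R in atTop, 0 < v R)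
    (hlog : Tendsto (fun R => Real.log R / v R) atTop (𝓝 0))
    (hscale : Tendsto (fun R => Θ R / (R * v R)) atTop (𝓝 0))
    (hmain : TendstoUniformlyOn (fun R x => R * poissonRate (x * (Θ R / R)) / v R) J atTop
      (Icc 0 C)) :
    TendstoUniformlyOn (fun R x => -Real.log (pFun β R (R + x * Θ R)) / v R) J atTop
      (Icc 0 C) := by
  refine (hmain.sub (tendstoUniformlyOn_mul_log_div_zero β hΘ hv hlog hscale)).congr_right
    (fun x _ => sub_zero _) |>.congr ?_
  filter_upwards [eventually_gt_atTop 0, hΘ] with R hR hΘR x ⟨hx0, _⟩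
  have hu : R + x * Θ R = R * (1 + x * (Θ R / R)) := by field_simp
  simp only [Pi.sub_apply]
  rw [hu, neg_log_pFun_mul_one_add β hR (by positivity), sub_div]

lemma tendsto_atTop_of_tendsto_div_sqrt_mul_log {Θ : ℝ → ℝ}
    (hLD : Tendsto (fun R => Θ R / Real.sqrt (R * Real.log R)) atTop atTop) :
    Tendsto Θ atTop atTop := by
  have hsqrt : Tendsto (fun R => Real.sqrt (R * Real.log R)) atTop atTop :=
    Real.tendsto_sqrt_atTop.comp (tendsto_id.atTop_mul_atTop₀ Real.tendsto_log_atTop)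
  refine (hLD.atTop_mul_atTop₀ hsqrt).congr' ?_
  filter_upwards [hsqrt.eventually_gt_atTop 0] with R hR
  exact div_mul_cancel₀ _ hR.ne'

lemma tendsto_mul_log_div_sq_of_tendsto_div_sqrt_mul_log {Θ : ℝ → ℝ}
    (hLD : Tendsto (fun R => Θ R / Real.sqrt (R * Real.log R)) atTop atTop) :
    Tendsto (fun R => R * Real.log R / Θ R ^ 2) atTop (𝓝 0) := by
  have h := hLD.inv_tendsto_atTop.pow 2
  rw [zero_pow two_ne_zero] at h
  refine h.congr' ?_
  filter_upwards [eventually_ge_atTop 1] with R hR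
  have : 0 ≤ R * Real.log R := mul_nonneg (by linarith) (Real.log_nonneg hR)
  simp [inv_div, div_pow, Real.sq_sqrt this]

lemma pFun_large_deviation_of_sublinear (β C : ℝ) {Θ : ℝ → ℝ} (hΘ : Tendsto Θ atTop atTop)
    (hRlogR : Tendsto (fun R => R * Real.log R / Θ R ^ 2) atTop (𝓝 0))
    (hs : Tendsto (fun R => Θ R / R) atTop (𝓝 0)) :
    TendstoUniformlyOn (fun R x => -Real.log (pFun β R (R + x * Θ R)) / (Θ R ^ 2 / R))
      (fun t => t ^ 2 / 2) atTop (Icc 0 C) := by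
  have hpos : ∀ᶠ R in atTop, 0 < Θ R ∧ 0 < R :=
    (hΘ.eventually_gt_atTop 0).and (eventually_gt_atTop 0)
  refine tendstoUniformlyOn_neg_log_pFun_div β (hpos.mono fun _ h => h.1.le)
    (hpos.mono fun _ h => div_pos (pow_pos h.1 2) h.2) ?_ ?_ ?_
  · exact hRlogR.congr fun R => by rw [div_div_eq_mul_div]; ring
  · refine (tendsto_inv_atTop_zero.comp hΘ).congr' ?_
    filter_upwards [hpos] with R ⟨hΘR, hR⟩
    simp only [Function.comp_apply]
    field_simp
  · have hs' : Tendsto (fun R => Θ R / R) atTop (𝓝[>] 0) :=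
      tendsto_nhdsWithin_iff.2 ⟨hs, hpos.mono fun _ h => div_pos h.1 h.2⟩
    exact (tendstoUniformlyOn_poissonRate_div_sq hs' C).congr
      (Eventually.of_forall fun R x _ => by
        dsimp only; rw [div_pow, div_div_eq_mul_div, div_div_eq_mul_div]; ring)

lemma pFun_large_deviation_of_linear (β C : ℝ) {Θ : ℝ → ℝ}
    (ht : Tendsto (fun R => Θ R / R) atTop (𝓝 1)) :
    TendstoUniformlyOn (fun R x => -Real.log (pFun β R (R + x * Θ R)) / Θ R) poissonRate atTop
      (Icc 0 C) := by
  have hpos : ∀ᶠ R in atTop, 0 < Θ R ∧ 0 < R := by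
    filter_upwards [ht.eventually_const_lt one_pos, eventually_gt_atTop 0] with R h1 h2
    exact ⟨(div_pos_iff_of_pos_right h2).1 h1, h2⟩
  refine tendstoUniformlyOn_neg_log_pFun_div β (hpos.mono fun _ h => h.1.le)
    (hpos.mono fun _ h => h.1) ?_ ?_ ?_
  · have hlogR : Tendsto (fun R => Real.log R / R * (Θ R / R)⁻¹) atTop (𝓝 0) := by
      simpa using (Real.isLittleO_log_id_atTop.tendsto_div_nhds_zero).mul (ht.inv₀ one_ne_zero)
    refine hlogR.congr' ?_
    filter_upwards [hpos] with R ⟨hΘR, hR⟩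
    field_simp
  · refine tendsto_inv_atTop_zero.congr' ?_
    filter_upwards [hpos] with R ⟨hΘR, hR⟩
    field_simp
  · exact (tendstoUniformlyOn_poissonRate_div ht C).congr
      (Eventually.of_forall fun R x _ => by dsimp only; rw [div_div_eq_mul_div]; ring)

lemma pFun_large_deviation_of_superlinear (β C : ℝ) {Θ : ℝ → ℝ} {c : ℝ}
    (hw : Tendsto (fun R => Θ R / R) atTop atTop)
    (hc : Tendsto (fun R => Real.log R / Real.log (Θ R)) atTop (𝓝 c)) :
    TendstoUniformlyOn (fun R x => -Real.log (pFun β R (R + x * Θ R)) / (Θ R * Real.log (Θ R)))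
      (fun t => t * (1 - c)) atTop (Icc 0 C) := by
  have hge : ∀ᶠ R in atTop, 1 ≤ Θ R / R ∧ 0 < R :=
    (hw.eventually_ge_atTop 1).and (eventually_gt_atTop 0)
  have hΘ : Tendsto Θ atTop atTop := by
    refine tendsto_atTop_mono' atTop ?_ tendsto_id
    filter_upwards [hge] with R ⟨h1, h2⟩
    exact (one_le_div h2).1 h1
  have hL : Tendsto (fun R => Real.log (Θ R)) atTop atTop := Real.tendsto_log_atTop.comp hΘ
  have hpos : ∀ᶠ R in atTop, 1 < Θ R ∧ 0 < R :=
    (hΘ.eventually_gt_atTop 1).and (eventually_gt_atTop 0)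
  refine tendstoUniformlyOn_neg_log_pFun_div β (hpos.mono fun _ h => by linarith [h.1])
    (hpos.mono fun _ h => mul_pos (by linarith [h.1]) (Real.log_pos h.1)) ?_ ?_ ?_
  · have h := hc.mul (tendsto_inv_atTop_zero.comp hΘ)
    rw [mul_zero] at h
    exact h.congr fun R => by simp only [Function.comp_apply]; ring
  · have h := tendsto_inv_atTop_zero.mul (tendsto_inv_atTop_zero.comp hL)
    rw [mul_zero] at h
    refine h.congr' ?_
    filter_upwards [hpos] with R ⟨hΘR, hR⟩
    have : 0 < Real.log (Θ R) := Real.log_pos hΘR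
    simp only [Function.comp_apply]
    field_simp
  · have ha : Tendsto (fun R => Real.log (Θ R / R) / Real.log (Θ R)) atTop (𝓝 (1 - c)) := by
      refine (tendsto_const_nhds.sub hc).congr' ?_
      filter_upwards [hpos] with R ⟨hΘR, hR⟩
      have : 0 < Real.log (Θ R) := Real.log_pos hΘR
      rw [Real.log_div (by linarith) hR.ne']
      field_simp
    exact (tendstoUniformlyOn_poissonRate_div_mul (hge.mono fun _ h => h.1) hL ha C).congr
      (Eventually.of_forall fun R x _ => by
        dsimp only; rw [div_mul_eq_mul_div, div_div_eq_mul_div]; ring)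

theorem pFun_uniform_large_deviation_general
    (β : ℝ)
    (Θ : ℝ → ℝ)
    (hLD : Tendsto (fun R => Θ R / Real.sqrt (R * Real.log R)) atTop atTop)
    (v J : ℝ → ℝ)
    (hreg :
      (Tendsto (fun R => Θ R / R) atTop (𝓝 0) ∧
        (∃ γ : ℝ, Tendsto (fun R => 2 * Real.log (Θ R) / Real.log R) atTop (𝓝 γ)) ∧
        v = (fun R => (Θ R) ^ 2 / R) ∧ J = fun t => t ^ 2 / 2) ∨
      (Tendsto (fun R => Θ R / R) atTop (𝓝 1) ∧
        v = Θ ∧ J = fun t => (1 + t) * Real.log (1 + t) - t) ∨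
      (Tendsto (fun R => Θ R / R) atTop atTop ∧
        v = (fun R => Θ R * Real.log (Θ R)) ∧
        ((∃ γ : ℝ, 0 < γ ∧
            Tendsto (fun R => 2 * Real.log (Θ R) / Real.log R) atTop (𝓝 γ) ∧
            J = fun t => t * (1 - 2 / γ)) ∨
          (Tendsto (fun R => 2 * Real.log (Θ R) / Real.log R) atTop atTop ∧
            J = fun t => t)))) :
    ∀ C : ℝ, 0 < C →
      TendstoUniformlyOn
        (fun R : ℝ => fun x : ℝ => -(Real.log (pFun β R (R + x * Θ R))) / v R)
        J atTop (Set.Icc 0 C) := by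
  intro C _
  rcases hreg with ⟨hs, -, rfl, rfl⟩ | ⟨ht, rfl, rfl⟩ | ⟨hw, rfl, hJ⟩
  · exact pFun_large_deviation_of_sublinear β C (tendsto_atTop_of_tendsto_div_sqrt_mul_log hLD)
      (tendsto_mul_log_div_sq_of_tendsto_div_sqrt_mul_log hLD) hs
  · exact pFun_large_deviation_of_linear β C ht
  · obtain ⟨c, hc, rfl⟩ : ∃ c, Tendsto (fun R => Real.log R / Real.log (Θ R)) atTop (𝓝 c) ∧
        J = fun t => t * (1 - c) := by
      rcases hJ with ⟨γ, hγ, hlim, rfl⟩ | ⟨hlim, rfl⟩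
      · refine ⟨2 / γ, (tendsto_const_nhds.div hlim hγ.ne').congr fun R => ?_, rfl⟩
        rw [Pi.div_apply, div_div_eq_mul_div]
        ring
      · have h := hlim.inv_tendsto_atTop.const_mul 2
        rw [mul_zero] at h
        refine ⟨0, h.congr fun R => ?_, by simp⟩
        rw [Pi.inv_apply, inv_div]
        ring
    exact pFun_large_deviation_of_superlinear β C hw hc

/-- Under Assumption (LD), `−(1/v_R) log p_R(R + xΘ_R) → J_γ(x)` uniformly for
`x ∈ [0,C]`, for every `C > 0`. -/
theorem pFun_uniform_large_deviation
    (β : ℝ) (hβ : 0 < β)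
    (Θ : ℝ → ℝ) (hΘpos : ∀ R > (0:ℝ), 0 < Θ R)
    (hLD : Tendsto (fun R => Θ R / Real.sqrt (R * Real.log R)) atTop atTop)
    (v J : ℝ → ℝ)
    (hreg :
      (Tendsto (fun R => Θ R / R) atTop (𝓝 0) ∧
        (∃ γ : ℝ, Tendsto (fun R => 2 * Real.log (Θ R) / Real.log R) atTop (𝓝 γ)) ∧
        v = (fun R => (Θ R) ^ 2 / R) ∧ J = fun t => t ^ 2 / 2) ∨
      (Tendsto (fun R => Θ R / R) atTop (𝓝 1) ∧
        v = Θ ∧ J = fun t => (1 + t) * Real.log (1 + t) - t) ∨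
      (Tendsto (fun R => Θ R / R) atTop atTop ∧
        v = (fun R => Θ R * Real.log (Θ R)) ∧
        ((∃ γ : ℝ, 0 < γ ∧
            Tendsto (fun R => 2 * Real.log (Θ R) / Real.log R) atTop (𝓝 γ) ∧
            J = fun t => t * (1 - 2 / γ)) ∨
          (Tendsto (fun R => 2 * Real.log (Θ R) / Real.log R) atTop atTop ∧
            J = fun t => t)))) :
    ∀ C : ℝ, 0 < C →
      TendstoUniformlyOn
        (fun R : ℝ => fun x : ℝ => -(Real.log (pFun β R (R + x * Θ R))) / v R)
        J atTop (Set.Icc 0 C) :=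
  pFun_uniform_large_deviation_general β Θ hLD v J hreg

end
end

section
/- For all reals s ≤ t: √π · ∫_ℝ Φ₀(x − 2s) · (1 − Φ₀(x − 2t)) dx = e^{−(t−s)²} − 2√π (t − s) · Φ₀(√2 (t − s)). (Exact evaluation of the covariance kernel of the limiting Gaussian process for microscopic counting fluctuations of the Ginibre ensemble; in particular both sides equal 1 when s = t.) -/
/-!
Write `φ u = exp (-u²/2)`, so that `Φ₀ x` and `1 - Φ₀ (x - 2a)` are, up to the factor
`(2π)^{-1/2}`, the integrals of `φ` over `u > x` and over `v < x - 2a`. By Tonelli,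
`∫ Φ₀(x) (1 - Φ₀(x - 2a)) dx = (2π)⁻¹ ∬ φ(u) φ(v) (u - v - 2a)₊ du dv`, the length of the
`x`-interval `(v + 2a, u)`. Substituting `v = u - w` and completing the square,
`∫ φ(u) φ(u - w) du = √π e^{-w²/4}`, which leaves the one-dimensional integral
`∫_{w > 2a} (w - 2a) e^{-w²/4} dw`; after `w = √2 y` it is computed from
`∫_{y > x} y φ(y) dy = φ(x)`. Working with lower Lebesgue integrals makes Tonelli
unconditional, and the integrability of the original integrand is never needed separately.
-/

open MeasureTheory Filter Set

noncomputable section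

/-- The standard Gaussian tail function `Φ₀`. -/
def gaussTail (x : ℝ) : ℝ :=
  (Real.sqrt (2 * Real.pi))⁻¹ * ∫ t in Set.Ioi x, Real.exp (-t ^ 2 / 2)

open Real
open scoped ENNReal

theorem lintegral_setLIntegral_Ioi_mul_setLIntegral_Iio {f g : ℝ → ℝ≥0∞}
    (hf : Measurable f) (hg : Measurable g) (b : ℝ) :
    ∫⁻ x, (∫⁻ u in Ioi x, f u) * ∫⁻ v in Iio (x - b), g v =
      ∫⁻ u, ∫⁻ v, f u * g v * ENNReal.ofReal (u - v - b) := by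
  set F : ℝ × ℝ × ℝ → ℝ≥0∞ :=
    {q | q.2.2 + b < q.1 ∧ q.1 < q.2.1}.indicator fun q => f q.2.1 * g q.2.2 with hF_def
  have hF : Measurable F :=
    (by fun_prop : Measurable fun q : ℝ × ℝ × ℝ => f q.2.1 * g q.2.2).indicator
      ((measurableSet_lt (by fun_prop) measurable_fst).inter
        (measurableSet_lt measurable_fst (by fun_prop)))
  have h_product : ∀ x, (∫⁻ u in Ioi x, f u) * ∫⁻ v in Iio (x - b), g v = ∫⁻ p, F (x, p) := by
    intro x
    rw [← lintegral_indicator measurableSet_Ioi, ← lintegral_indicator measurableSet_Iio,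
      Measure.volume_eq_prod, ← lintegral_prod_mul (hf.indicator measurableSet_Ioi).aemeasurable
        (hg.indicator measurableSet_Iio).aemeasurable]
    congr with p
    simp only [hF_def, indicator_apply, mem_Ioi, mem_Iio, mem_ofPred_eq, lt_sub_iff_add_lt,
      ite_zero_mul_ite_zero, and_comm]
  have h_length : ∀ p : ℝ × ℝ, ∫⁻ x, F (x, p) = f p.1 * g p.2 * ENNReal.ofReal (p.1 - p.2 - b) := by
    intro p
    have h_slice : (fun x => F (x, p)) = (Ioo (p.2 + b) p.1).indicator fun _ => f p.1 * g p.2 := by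
      ext x; simp [hF_def, indicator_apply]
    rw [h_slice, lintegral_indicator_const measurableSet_Ioo, Real.volume_Ioo, sub_add_eq_sub_sub]
  simp_rw [h_product]
  rw [lintegral_lintegral_swap (f := fun x p => F (x, p)) hF.aemeasurable,
    Measure.volume_eq_prod, lintegral_prod _ (by fun_prop)]
  simp_rw [h_length]

theorem lintegral_lintegral_mul_comp_sub {f g k : ℝ → ℝ≥0∞}
    (hf : Measurable f) (hg : Measurable g) (hk : Measurable k) :
    ∫⁻ u, ∫⁻ v, f u * g v * k (u - v) = ∫⁻ w, (∫⁻ u, f u * g (u - w)) * k w := by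
  have h_sub : ∀ u, ∫⁻ v, f u * g v * k (u - v) = ∫⁻ w, f u * g (u - w) * k w := fun u => by
    rw [← lintegral_sub_left_eq_self _ u]
    simp only [sub_sub_cancel]
  simp_rw [h_sub]
  rw [lintegral_lintegral_swap (by fun_prop)]
  congr with w
  exact lintegral_mul_const _ (by fun_prop)

theorem integrable_exp_neg_sq_div {c : ℝ} (hc : 0 < c) :
    Integrable fun x : ℝ => exp (-x ^ 2 / c) := by
  simpa [neg_div, div_eq_inv_mul] using integrable_exp_neg_mul_sq (inv_pos.2 hc)

theorem integrable_mul_exp_neg_sq_div {c : ℝ} (hc : 0 < c) :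
    Integrable fun x : ℝ => x * exp (-x ^ 2 / c) := by
  simpa [neg_div, div_eq_inv_mul] using integrable_mul_exp_neg_mul_sq (inv_pos.2 hc)

theorem integral_exp_neg_sq_div_two : ∫ x : ℝ, exp (-x ^ 2 / 2) = √(2 * π) := by
  simpa [neg_div, div_eq_inv_mul] using integral_gaussian 2⁻¹

theorem integral_Ioi_exp_neg_sq_div_two (x : ℝ) :
    ∫ y in Ioi x, exp (-y ^ 2 / 2) = √(2 * π) * gaussTail x := by
  rw [gaussTail, ← mul_assoc, mul_inv_cancel₀ (by positivity), one_mul]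

theorem one_sub_gaussTail (x : ℝ) :
    1 - gaussTail x = (√(2 * π))⁻¹ * ∫ y in Iio x, exp (-y ^ 2 / 2) := by
  have h := intervalIntegral.integral_Iio_add_Ici (f := fun y => exp (-y ^ 2 / 2)) (b := x)
    (integrable_exp_neg_sq_div two_pos).integrableOn
    (integrable_exp_neg_sq_div two_pos).integrableOn
  rw [integral_Ici_eq_integral_Ioi, integral_exp_neg_sq_div_two,
    integral_Ioi_exp_neg_sq_div_two] at h
  rw [show ∫ y in Iio x, exp (-y ^ 2 / 2) = √(2 * π) * (1 - gaussTail x) by linarith,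
    ← mul_assoc, inv_mul_cancel₀ (by positivity), one_mul]

theorem gaussTail_le_one (x : ℝ) : gaussTail x ≤ 1 := by
  rw [← sub_nonneg, one_sub_gaussTail]
  exact mul_nonneg (by positivity) (setIntegral_nonneg measurableSet_Iio fun _ _ => (exp_pos _).le)

theorem gaussTail_antitone : Antitone gaussTail := fun x y hxy =>
  mul_le_mul_of_nonneg_left (setIntegral_mono_set (integrable_exp_neg_sq_div two_pos).integrableOn
    (ae_of_all _ fun _ => (exp_pos _).le) (Ioi_subset_Ioi hxy).eventuallyLE) (by positivity)

theorem gaussTail_nonneg (x : ℝ) : 0 ≤ gaussTail x :=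
  mul_nonneg (by positivity) (setIntegral_nonneg measurableSet_Ioi fun _ _ => (exp_pos _).le)

theorem integral_Ioi_mul_exp_neg_sq_div_two (x : ℝ) :
    ∫ y in Ioi x, y * exp (-y ^ 2 / 2) = exp (-x ^ 2 / 2) := by
  have h_deriv : ∀ y ∈ Ici x, HasDerivAt (fun y => -exp (-y ^ 2 / 2)) (y * exp (-y ^ 2 / 2)) y :=
    fun y _ => ((hasDerivAt_pow 2 y).fun_neg.div_const 2).exp.fun_neg.congr_deriv
      (by push_cast; ring)
  have h_lim : Tendsto (fun y : ℝ => -exp (-y ^ 2 / 2)) atTop (nhds (-0)) :=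
    (tendsto_exp_atBot.comp
      ((tendsto_neg_atTop_atBot.comp (tendsto_pow_atTop two_ne_zero)).atBot_div_const two_pos)).neg
  rw [integral_Ioi_of_hasDerivAt_of_tendsto' h_deriv
    (integrable_mul_exp_neg_sq_div two_pos).integrableOn h_lim]
  ring

theorem integral_Ioi_sub_mul_exp_neg_sq_div_two (x : ℝ) :
    ∫ y in Ioi x, (y - x) * exp (-y ^ 2 / 2) = exp (-x ^ 2 / 2) - x * √(2 * π) * gaussTail x := by
  simp_rw [sub_mul]
  rw [integral_sub (integrable_mul_exp_neg_sq_div two_pos).integrableOn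
      ((integrable_exp_neg_sq_div two_pos).const_mul x).integrableOn,
    integral_Ioi_mul_exp_neg_sq_div_two, integral_const_mul, integral_Ioi_exp_neg_sq_div_two,
    mul_assoc]

theorem integral_Ioi_two_mul_sub_mul_exp_neg_sq_div_four (a : ℝ) :
    ∫ w in Ioi (2 * a), (w - 2 * a) * exp (-w ^ 2 / 4) =
      2 * (exp (-a ^ 2) - 2 * √π * a * gaussTail (√2 * a)) := by
  have h_sqrt2 : √2 * √2 = 2 := mul_self_sqrt zero_le_two
  have h_scale := integral_comp_mul_left_Ioi (fun w => (w - 2 * a) * exp (-w ^ 2 / 4))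
    (√2 * a) (by positivity : 0 < √2)
  have h_integrand : ∀ y, (√2 * y - 2 * a) * exp (-(√2 * y) ^ 2 / 4) =
      √2 * ((y - √2 * a) * exp (-y ^ 2 / 2)) := fun y => by
    rw [mul_pow, sq_sqrt zero_le_two, show -(2 * y ^ 2) / 4 = -y ^ 2 / 2 by ring]
    linear_combination a * exp (-y ^ 2 / 2) * h_sqrt2
  have h_exp : -(√2 * a) ^ 2 / 2 = -a ^ 2 := by
    rw [mul_pow, sq_sqrt zero_le_two]; ring
  rw [← mul_assoc, h_sqrt2] at h_scale
  simp only [h_integrand, smul_eq_mul] at h_scale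
  rw [integral_const_mul, integral_Ioi_sub_mul_exp_neg_sq_div_two, h_exp, sqrt_mul zero_le_two]
    at h_scale
  rw [← mul_inv_cancel_left₀ (sqrt_ne_zero'.2 two_pos)
    (∫ w in Ioi (2 * a), (w - 2 * a) * exp (-w ^ 2 / 4)), ← h_scale]
  linear_combination (exp (-a ^ 2) - a * √π * gaussTail (√2 * a) * (√2 * √2 + 2)) * h_sqrt2

theorem lintegral_ofReal_exp_neg_sq_div_two_mul_comp_sub (w : ℝ) :
    ∫⁻ u, ENNReal.ofReal (exp (-u ^ 2 / 2)) * ENNReal.ofReal (exp (-(u - w) ^ 2 / 2)) =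
      ENNReal.ofReal (√π * exp (-w ^ 2 / 4)) := by
  have h_square : ∀ u, exp (-u ^ 2 / 2) * exp (-(u - w) ^ 2 / 2) =
      exp (-w ^ 2 / 4) * exp (-1 * (u - w / 2) ^ 2) := fun u => by
    rw [← exp_add, ← exp_add]; ring_nf
  simp_rw [← ENNReal.ofReal_mul (exp_pos _).le, h_square]
  rw [← ofReal_integral_eq_lintegral_ofReal
      (((integrable_exp_neg_mul_sq one_pos).comp_sub_right (w / 2)).const_mul _)
      (ae_of_all _ fun _ => by positivity),
    integral_const_mul, integral_sub_right_eq_self (fun u => exp (-1 * u ^ 2)), integral_gaussian,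
    div_one, mul_comm]

theorem lintegral_ofReal_mul_ofReal_sub {h : ℝ → ℝ} {b : ℝ} (h_nonneg : ∀ w, 0 ≤ h w)
    (h_int : IntegrableOn (fun w => (w - b) * h w) (Ioi b)) :
    ∫⁻ w, ENNReal.ofReal (h w) * ENNReal.ofReal (w - b) =
      ENNReal.ofReal (∫ w in Ioi b, (w - b) * h w) := by
  have h_supp : (Function.support fun w => ENNReal.ofReal ((w - b) * h w)) ⊆ Ioi b := by
    intro w hw
    by_contra hwb
    exact hw (ENNReal.ofReal_eq_zero.2
      (mul_nonpos_of_nonpos_of_nonneg (by simpa using hwb) (h_nonneg w)))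
  simp_rw [← ENNReal.ofReal_mul (h_nonneg _), mul_comm (h _)]
  rw [ofReal_integral_eq_lintegral_ofReal h_int, setLIntegral_eq_of_support_subset h_supp]
  filter_upwards [self_mem_ae_restrict measurableSet_Ioi] with w hw
  exact mul_nonneg (sub_nonneg.2 (le_of_lt hw)) (h_nonneg w)

theorem lintegral_ofReal_gaussTail_mul_one_sub_gaussTail_sub (a : ℝ) :
    ∫⁻ x, ENNReal.ofReal (gaussTail x * (1 - gaussTail (x - 2 * a))) =
      ENNReal.ofReal ((√(2 * π))⁻¹ * (√(2 * π))⁻¹ *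
        (√π * ∫ w in Ioi (2 * a), (w - 2 * a) * exp (-w ^ 2 / 4))) := by
  set G : ℝ → ℝ≥0∞ := fun u => ENNReal.ofReal (exp (-u ^ 2 / 2))
  have hG : Measurable G := by fun_prop
  have h_ofReal : ∀ s : Set ℝ, ENNReal.ofReal ((√(2 * π))⁻¹ * ∫ u in s, exp (-u ^ 2 / 2)) =
      ENNReal.ofReal (√(2 * π))⁻¹ * ∫⁻ u in s, G u := fun s => by
    rw [ENNReal.ofReal_mul (by positivity), ofReal_integral_eq_lintegral_ofReal
      (integrable_exp_neg_sq_div two_pos).integrableOn (ae_of_all _ fun _ => (exp_pos _).le)]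
  have h_int : IntegrableOn (fun w => (w - 2 * a) * (√π * exp (-w ^ 2 / 4))) (Ioi (2 * a)) := by
    simp_rw [mul_left_comm _ √π, sub_mul]
    exact (((integrable_mul_exp_neg_sq_div four_pos).sub
      ((integrable_exp_neg_sq_div four_pos).const_mul _)).const_mul _).integrableOn
  calc ∫⁻ x, ENNReal.ofReal (gaussTail x * (1 - gaussTail (x - 2 * a)))
      = ENNReal.ofReal (√(2 * π))⁻¹ * ENNReal.ofReal (√(2 * π))⁻¹ *
          ∫⁻ x, (∫⁻ u in Ioi x, G u) * ∫⁻ v in Iio (x - 2 * a), G v := by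
        rw [← lintegral_const_mul' _ _ (by finiteness)]
        congr with x
        rw [ENNReal.ofReal_mul (gaussTail_nonneg x), one_sub_gaussTail, gaussTail, h_ofReal,
          h_ofReal]
        ring
    _ = ENNReal.ofReal (√(2 * π))⁻¹ * ENNReal.ofReal (√(2 * π))⁻¹ *
          ∫⁻ w, (∫⁻ u, G u * G (u - w)) * ENNReal.ofReal (w - 2 * a) := by
        rw [lintegral_setLIntegral_Ioi_mul_setLIntegral_Iio hG hG,
          lintegral_lintegral_mul_comp_sub hG hG (k := fun w => ENNReal.ofReal (w - 2 * a))
            (by fun_prop)]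
    _ = _ := by
        simp_rw [G, lintegral_ofReal_exp_neg_sq_div_two_mul_comp_sub]
        rw [lintegral_ofReal_mul_ofReal_sub (fun _ => by positivity) h_int,
          ← ENNReal.ofReal_mul (by positivity), ← ENNReal.ofReal_mul (by positivity)]
        simp_rw [mul_left_comm _ √π, integral_const_mul]
        congr 1
        ring

theorem sqrt_pi_mul_integral_gaussTail_mul_one_sub_gaussTail_sub (a : ℝ) :
    √π * ∫ x, gaussTail x * (1 - gaussTail (x - 2 * a)) =
      exp (-a ^ 2) - 2 * √π * a * gaussTail (√2 * a) := by
  have h_nonneg : ∀ x, 0 ≤ gaussTail x * (1 - gaussTail (x - 2 * a)) := fun x =>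
    mul_nonneg (gaussTail_nonneg x) (sub_nonneg.2 (gaussTail_le_one _))
  have h_meas : Measurable fun x => gaussTail x * (1 - gaussTail (x - 2 * a)) :=
    gaussTail_antitone.measurable.mul
      (measurable_const.sub (gaussTail_antitone.measurable.comp (measurable_sub_const _)))
  have h_kernel_nonneg : 0 ≤ ∫ w in Ioi (2 * a), (w - 2 * a) * exp (-w ^ 2 / 4) :=
    setIntegral_nonneg measurableSet_Ioi fun w hw =>
      mul_nonneg (sub_nonneg.2 (le_of_lt hw)) (exp_pos _).le
  rw [integral_eq_lintegral_of_nonneg_ae (ae_of_all _ h_nonneg) h_meas.aestronglyMeasurable,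
    lintegral_ofReal_gaussTail_mul_one_sub_gaussTail_sub,
    ENNReal.toReal_ofReal (by positivity), integral_Ioi_two_mul_sub_mul_exp_neg_sq_div_four,
    ← mul_inv, mul_self_sqrt (by positivity)]
  generalize gaussTail (√2 * a) = Φ
  have h_pi : √π * √π = π := mul_self_sqrt pi_pos.le
  field_simp
  linear_combination (exp (-a ^ 2) - 2 * √π * a * Φ) * h_pi

theorem ginibre_covariance_kernel_identity_general (s t : ℝ) :
    Real.sqrt Real.pi * ∫ x : ℝ, gaussTail (x - 2 * s) * (1 - gaussTail (x - 2 * t))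
      = Real.exp (-(t - s) ^ 2)
        - 2 * Real.sqrt Real.pi * (t - s) * gaussTail (Real.sqrt 2 * (t - s)) := by
  have h_shift : ∫ x, gaussTail (x - 2 * s) * (1 - gaussTail (x - 2 * t)) =
      ∫ x, gaussTail x * (1 - gaussTail (x - 2 * (t - s))) := by
    rw [← integral_sub_right_eq_self (fun x => gaussTail x * (1 - gaussTail (x - 2 * (t - s))))
      (2 * s)]
    congr with x
    rw [show x - 2 * s - 2 * (t - s) = x - 2 * t by ring]
  rw [h_shift]
  exact sqrt_pi_mul_integral_gaussTail_mul_one_sub_gaussTail_sub (t - s)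

/-- Exact evaluation of the covariance kernel of the limiting Gaussian process for
microscopic counting fluctuations of the Ginibre ensemble: for all `s ≤ t`,
`√π ∫_ℝ Φ₀(x−2s)(1−Φ₀(x−2t)) dx = e^{−(t−s)²} − 2√π(t−s)Φ₀(√2(t−s))`. -/
theorem ginibre_covariance_kernel_identity (s t : ℝ) (hst : s ≤ t) :
    Real.sqrt Real.pi * ∫ x : ℝ, gaussTail (x - 2 * s) * (1 - gaussTail (x - 2 * t))
      = Real.exp (-(t - s) ^ 2)
        - 2 * Real.sqrt Real.pi * (t - s) * gaussTail (Real.sqrt 2 * (t - s)) :=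
  ginibre_covariance_kernel_identity_general s t

end
end
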